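/- arXiv:1806.04996 — 4 statements merged into one kernel-verified Lean document; each statement's English description precedes it below -/
import Mathlib

section
/- Let S be a finite semigroup of cardinality n. Then S has trivial local monoids if and only if S satisfies the LI_{n+1} identity. -/
/-!
Among the prefix products of a word of length greater than `|S|` in `WithOne S`, two coincide,
say `p = p * w` with `w` a non-empty factor. The elements `m` with `p * m = p` then form a
non-empty subsemigroup of `S`, which contains an idempotent `e`; hence every such product
factors as `a * e * b`. Trivial local monoids give `e * s * f = e * f` for idempotents `e, f`,
so the letter `z` between the two idempotent-carrying halves of `x₁⋯xₖ · z · yₖ⋯y₁` can be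
removed. Conversely, taking all `xᵢ = yᵢ = e` turns LI_k into `e * z * e = e`.
-/

/-- A semigroup `S` satisfies the LI_k identity if
`x₁⋯x_k · z · y_k⋯y₁ = x₁⋯x_k · y_k⋯y₁` for all `x₁,…,x_k, y₁,…,y_k, z ∈ S`.
Products of the (non-empty, for `k ≥ 1`) sequences are computed in the monoid
`WithOne S`, into which `S` embeds. -/
def SatisfiesLI (S : Type*) [Semigroup S] (k : ℕ) : Prop :=
  ∀ (x y : Fin k → S) (z : S),
    (List.ofFn fun i => (x i : WithOne S)).prod * (z : WithOne S) *
        ((List.ofFn fun i => (y i : WithOne S)).reverse.prod) =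
      (List.ofFn fun i => (x i : WithOne S)).prod *
        ((List.ofFn fun i => (y i : WithOne S)).reverse.prod)

theorem List.exists_eq_append_append_prod_mul_eq {α M : Type*} [Monoid M] [Fintype M]
    (f : α → M) (l : List α) (hl : Fintype.card M ≤ l.length) :
    ∃ l₁ l₂ l₃ : List α, l = l₁ ++ l₂ ++ l₃ ∧ l₂ ≠ [] ∧
      (l₁.map f).prod * (l₂.map f).prod = (l₁.map f).prod := by
  obtain ⟨i, j, hij, hprod⟩ := Fintype.exists_ne_map_eq_of_card_lt
    (fun k : Fin (l.length + 1) => ((l.take k).map f).prod) (by simpa using hl)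
  wlog hlt : (i : ℕ) < j generalizing i j
  · exact this j i hij.symm hprod.symm (by omega)
  have htake : l.take j = l.take i ++ (l.take j).drop i := by
    conv_lhs => rw [← List.take_append_drop i (l.take j)]
    rw [List.take_take, min_eq_left hlt.le]
  refine ⟨l.take i, (l.take j).drop i, l.drop j, ?_, ?_, ?_⟩
  · rw [← htake, List.take_append_drop]
  · rw [← List.length_pos_iff]
    simp only [List.length_drop, List.length_take]
    omega
  · have : ((l.take j).map f).prod = ((l.take i).map f).prod := hprod.symm
    rwa [htake, List.map_append, List.prod_append] at this

theorem exists_isIdempotentElem_mem_of_finite {M : Type*} [Semigroup M] [Finite M] (s : Set M)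
    (hs : s.Nonempty) (hmul : ∀ x ∈ s, ∀ y ∈ s, x * y ∈ s) : ∃ e ∈ s, IsIdempotentElem e := by
  let _ : TopologicalSpace M := ⊥
  have : DiscreteTopology M := ⟨rfl⟩
  exact exists_idempotent_in_compact_subsemigroup (fun _ => continuous_of_discreteTopology) s hs
    s.toFinite.isCompact hmul

theorem WithOne.exists_prod_map_coe_eq {S : Type*} [Semigroup S] :
    ∀ l : List S, l ≠ [] → ∃ s : S, (l.map ((↑) : S → WithOne S)).prod = s
  | [a], _ => ⟨a, by simp⟩
  | a :: b :: t, _ => by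
    obtain ⟨s, hs⟩ := exists_prod_map_coe_eq (b :: t) (List.cons_ne_nil _ _)
    exact ⟨a * s, by rw [List.map_cons, List.prod_cons, hs, WithOne.coe_mul]⟩

section TrivialLocalMonoids

variable {S : Type*} [Semigroup S]

theorem mul_mul_eq_mul_of_isIdempotentElem (hLI : ∀ e x : S, IsIdempotentElem e → e * x * e = e)
    {e f : S} (he : IsIdempotentElem e) (hf : IsIdempotentElem f) (s : S) :
    e * s * f = e * f :=
  calc e * s * f = e * s * (f * e * f) := by rw [hLI f e hf]
    _ = e * (s * f) * e * f := by simp only [mul_assoc]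
    _ = e * f := by rw [hLI e (s * f) he]

theorem WithOne.coe_mul_mul_coe_eq_of_isIdempotentElem
    (hLI : ∀ e x : S, IsIdempotentElem e → e * x * e = e)
    {e f : S} (he : IsIdempotentElem e) (hf : IsIdempotentElem f) (u : WithOne S) :
    (e : WithOne S) * u * f = e * f := by
  cases u with
  | one => rw [mul_one]
  | coe s => rw [← WithOne.coe_mul, ← WithOne.coe_mul, ← WithOne.coe_mul,
      mul_mul_eq_mul_of_isIdempotentElem hLI he hf]

theorem exists_isIdempotentElem_prod_map_coe_eq_mul_coe_mul [Fintype S] (l : List S)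
    (hl : Fintype.card S < l.length) :
    ∃ (a b : WithOne S) (e : S), IsIdempotentElem e ∧ (l.map (↑)).prod = a * e * b := by
  let _ : Fintype (WithOne S) := inferInstanceAs (Fintype (Option S))
  have hcard : Fintype.card (WithOne S) = Fintype.card S + 1 := Fintype.card_option
  obtain ⟨l₁, l₂, l₃, rfl, hl₂, habsorb⟩ :=
    List.exists_eq_append_append_prod_mul_eq ((↑) : S → WithOne S) l (by omega)
  set p := (l₁.map ((↑) : S → WithOne S)).prod
  obtain ⟨w, hw⟩ := WithOne.exists_prod_map_coe_eq l₂ hl₂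
  obtain ⟨e, hpe, he⟩ := exists_isIdempotentElem_mem_of_finite {m : S | p * m = p}
    ⟨w, show p * w = p by rw [← hw]; exact habsorb⟩ fun x hx y hy => by
      rw [Set.mem_ofPred_eq, WithOne.coe_mul, ← mul_assoc, hx, hy]
  refine ⟨p, ((l₂ ++ l₃).map (↑)).prod, e, he, ?_⟩
  rw [List.append_assoc, List.map_append, List.prod_append, hpe]

theorem prod_map_coe_mul_mul_prod_map_coe_eq [Fintype S]
    (hLI : ∀ e x : S, IsIdempotentElem e → e * x * e = e) {l r : List S}
    (hl : Fintype.card S < l.length) (hr : Fintype.card S < r.length) (u : WithOne S) :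
    (l.map ((↑) : S → WithOne S)).prod * u * (r.map (↑)).prod =
      (l.map ((↑) : S → WithOne S)).prod * (r.map (↑)).prod := by
  obtain ⟨a, b, e, he, hab⟩ := exists_isIdempotentElem_prod_map_coe_eq_mul_coe_mul l hl
  obtain ⟨c, d, f, hf, hcd⟩ := exists_isIdempotentElem_prod_map_coe_eq_mul_coe_mul r hr
  have hsandwich := WithOne.coe_mul_mul_coe_eq_of_isIdempotentElem hLI he hf
  rw [hab, hcd]
  calc a * e * b * u * (c * f * d) = a * (e * (b * u * c) * f) * d := by simp only [mul_assoc]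
    _ = a * (e * (b * c) * f) * d := by rw [hsandwich, hsandwich]
    _ = a * e * b * (c * f * d) := by simp only [mul_assoc]

end TrivialLocalMonoids

/-- A finite semigroup of cardinality `n` has trivial local monoids if and only if
it satisfies the LI_{n+1} identity. -/
theorem stmt_1 {S : Type*} [Semigroup S] [Fintype S] :
    (∀ e x : S, e * e = e → e * x * e = e) ↔ SatisfiesLI S (Fintype.card S + 1) := by
  constructor
  · intro hLI x y z
    have hx : List.ofFn (fun i => (x i : WithOne S)) = (List.ofFn x).map (↑) :=
      List.map_ofFn.symm
    have hy : (List.ofFn fun i => (y i : WithOne S)).reverse = (List.ofFn y).reverse.map (↑) := by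
      rw [List.map_reverse, List.map_ofFn]; rfl
    rw [hx, hy]
    exact prod_map_coe_mul_mul_prod_map_coe_eq hLI (by simp) (by simp) z
  · intro hLI e x he
    have he' : IsIdempotentElem (e : WithOne S) := by
      rw [IsIdempotentElem, ← WithOne.coe_mul, he]
    have h := hLI (fun _ => e) (fun _ => e) x
    rw [List.ofFn_const, List.reverse_replicate, List.prod_replicate, he'.pow_succ_eq,
      ← WithOne.coe_mul, ← WithOne.coe_mul, ← WithOne.coe_mul, he] at h
    exact WithOne.coe_inj.mp h
end

section
/- A finite semigroup S has trivial local monoids if and only if there exists some k ≥ 1 such that S satisfies the LI_k identity. -/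
def HasTrivialLocalMonoids (S : Type*) [Semigroup S] : Prop :=
  ∀ e x : S, IsIdempotentElem e → e * x * e = e

instance WithOne.instFinite {S : Type*} [Finite S] : Finite (WithOne S) :=
  inferInstanceAs (Finite (Option S))

theorem exists_lt_le_map_eq {α : Type*} [Finite α] (f : ℕ → α) {n : ℕ} (hn : Nat.card α ≤ n) :
    ∃ i j, i < j ∧ j ≤ n ∧ f i = f j := by
  have hf : ¬ Function.Injective fun i : Fin (n + 1) => f i := fun hinj => by
    have := Nat.card_le_card_of_injective _ hinj
    simp only [Nat.card_eq_fintype_card, Fintype.card_fin] at this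
    omega
  obtain ⟨a, b, hab, hne⟩ := Function.not_injective_iff.mp hf
  rcases lt_or_gt_of_ne (Fin.val_ne_of_ne hne) with h | h
  · exact ⟨a, b, h, by omega, hab⟩
  · exact ⟨b, a, h, by omega, hab.symm⟩

theorem Set.Finite.exists_isIdempotentElem {M : Type*} [Semigroup M] {s : Set M}
    (hs : s.Finite) (hne : s.Nonempty) (hmul : ∀ x ∈ s, ∀ y ∈ s, x * y ∈ s) :
    ∃ e ∈ s, IsIdempotentElem e := by
  let : TopologicalSpace M := ⊥
  have : DiscreteTopology M := ⟨rfl⟩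
  exact exists_idempotent_in_compact_subsemigroup (fun _ => continuous_of_discreteTopology)
    s hne hs.isCompact hmul

namespace WithOne

variable {S : Type*} [Semigroup S]

theorem mul_ne_one {a : WithOne S} (ha : a ≠ 1) (b : WithOne S) : a * b ≠ 1 := by
  obtain ⟨s, rfl⟩ := ne_one_iff_exists.mp ha
  induction b using recOneCoe with
  | one => rwa [mul_one]
  | coe t => exact coe_ne_one

theorem list_prod_ne_one {l : List (WithOne S)} (hne : l ≠ []) (hl : ∀ a ∈ l, a ≠ 1) :
    l.prod ≠ 1 := by
  obtain ⟨a, t, rfl⟩ := List.exists_cons_of_ne_nil hne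
  rw [List.prod_cons]
  exact mul_ne_one (hl a List.mem_cons_self) _

theorem exists_isIdempotentElem_mul_coe_eq [Finite S] {p m : WithOne S} (hm : m ≠ 1)
    (hpm : p * m = p) : ∃ e : S, IsIdempotentElem e ∧ p * e = p := by
  let T : Set (WithOne S) := {x | x ≠ 1 ∧ p * x = p}
  have hmul : ∀ x ∈ T, ∀ y ∈ T, x * y ∈ T := by
    rintro x ⟨hx, hpx⟩ y ⟨-, hpy⟩
    exact ⟨mul_ne_one hx y, by rw [← mul_assoc, hpx, hpy]⟩
  obtain ⟨_, ⟨he, hpe⟩, hidem⟩ := (Set.toFinite T).exists_isIdempotentElem ⟨m, hm, hpm⟩ hmul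
  obtain ⟨e, rfl⟩ := ne_one_iff_exists.mp he
  exact ⟨e, coe_injective hidem, hpe⟩

theorem exists_list_prod_eq_mul_coe_mul [Finite S] (l : List (WithOne S))
    (hl : ∀ a ∈ l, a ≠ 1) (hlen : Nat.card (WithOne S) ≤ l.length) :
    ∃ (a b : WithOne S) (e : S), IsIdempotentElem e ∧ l.prod = a * e * b := by
  obtain ⟨i, j, hij, hj, hprefix⟩ := exists_lt_le_map_eq (fun i => (l.take i).prod) hlen
  set m := ((l.drop i).take (j - i)).prod
  have hm : m ≠ 1 := by
    refine list_prod_ne_one ?_ fun a ha => hl a (List.drop_subset _ _ (List.take_subset _ _ ha))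
    rw [← List.length_pos_iff, List.length_take, List.length_drop]
    omega
  have hpm : (l.take i).prod * m = (l.take i).prod := by
    rw [← List.prod_append, ← List.take_add, Nat.add_sub_cancel' hij.le, hprefix]
  obtain ⟨e, he, hpe⟩ := exists_isIdempotentElem_mul_coe_eq hm hpm
  refine ⟨(l.take i).prod, (l.drop i).prod, e, he, ?_⟩
  rw [hpe, List.prod_take_mul_prod_drop]

end WithOne

namespace HasTrivialLocalMonoids

variable {S : Type*} [Semigroup S] (h : HasTrivialLocalMonoids S)
include h

theorem mul_mul_eq {e f : S} (he : IsIdempotentElem e) (hf : IsIdempotentElem f) (u : S) :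
    e * u * f = e * f :=
  calc e * u * f = e * u * (f * e * f) := by rw [h f e hf]
    _ = e * (u * f) * e * f := by simp only [mul_assoc]
    _ = e * f := by rw [h e _ he]

theorem coe_mul_mul_eq {e f : S} (he : IsIdempotentElem e) (hf : IsIdempotentElem f)
    (w : WithOne S) : (e : WithOne S) * w * f = e * f := by
  induction w using WithOne.recOneCoe with
  | one => rw [mul_one]
  | coe u => exact congrArg _ (h.mul_mul_eq he hf u)

theorem satisfiesLI [Finite S] : SatisfiesLI S (Nat.card (WithOne S)) := by
  intro x y z
  obtain ⟨a, b, e, he, hx⟩ := WithOne.exists_list_prod_eq_mul_coe_mul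
    (List.ofFn fun i => (x i : WithOne S)) (by simp [List.mem_ofFn]) (by simp)
  obtain ⟨c, d, f, hf, hy⟩ := WithOne.exists_list_prod_eq_mul_coe_mul
    (List.ofFn fun i => (y i : WithOne S)).reverse (by simp [List.mem_ofFn]) (by simp)
  rw [hx, hy]
  calc a * e * b * z * (c * f * d) = a * (e * (b * z * c) * f) * d := by simp only [mul_assoc]
    _ = a * (e * (b * c) * f) * d := by rw [h.coe_mul_mul_eq he hf, h.coe_mul_mul_eq he hf]
    _ = a * e * b * (c * f * d) := by simp only [mul_assoc]

end HasTrivialLocalMonoids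

theorem SatisfiesLI.hasTrivialLocalMonoids {S : Type*} [Semigroup S] {k : ℕ}
    (h : SatisfiesLI S k) (hk : k ≠ 0) : HasTrivialLocalMonoids S := by
  intro e x he
  have hpow : (e : WithOne S) ^ k = e := (he.map WithOne.coeMulHom).pow_eq hk
  have := h (fun _ => e) (fun _ => e) x
  simp only [List.ofFn_const, List.reverse_replicate, List.prod_replicate, hpow] at this
  exact WithOne.coe_injective (this.trans (congrArg _ he))

/-- A finite semigroup has trivial local monoids if and only if it satisfies the
LI_k identity for some `k ≥ 1`. -/
theorem stmt_6 {S : Type*} [Semigroup S] [Finite S] :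
    (∀ e x : S, e * e = e → e * x * e = e) ↔ ∃ k : ℕ, 1 ≤ k ∧ SatisfiesLI S k :=
  ⟨fun h => ⟨_, Nat.card_pos, HasTrivialLocalMonoids.satisfiesLI h⟩,
    fun ⟨_, hk, h⟩ => h.hasTrivialLocalMonoids (by omega)⟩
end

section
/- Let S be a finite commutative semigroup with trivial local monoids such that every monogenic subsemigroup of S has cardinality at most k. Then S has a zero element z, and every product of at least k·(⌈log₂ |S|⌉ + 1) elements of S (i.e., the product of any finite sequence of elements of S of that length or longer) equals z. -/
/-- The monogenic subsemigroup generated by `s`, i.e. the set `{sⁱ : i ≥ 1}`.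
Powers are computed in the monoid `WithOne S`, into which `S` embeds. -/
def monogenic {S : Type*} [Semigroup S] (s : S) : Set S :=
  {x | ∃ i : ℕ, 1 ≤ i ∧ (x : WithOne S) = (s : WithOne S) ^ i}

/-- Let `S` be a finite commutative semigroup with trivial local monoids such that every
monogenic subsemigroup of `S` has cardinality at most `k`. Then `S` has a zero element
`z`, and every product of at least `k·(⌈log₂ |S|⌉ + 1)` elements of `S` equals `z`
(products of non-empty sequences are computed in `WithOne S`). -/
theorem stmt_9 {S : Type*} [CommSemigroup S] [Fintype S] [Nonempty S]
    (hLI : ∀ e x : S, e * e = e → e * x * e = e)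
    (k : ℕ) (hk : ∀ s : S, (monogenic s).ncard ≤ k) :
    ∃ z : S, (∀ x : S, z * x = z ∧ x * z = z) ∧
      ∀ l : List S, k * (Nat.clog 2 (Fintype.card S) + 1) ≤ l.length →
        (l.map fun x => (x : WithOne S)).prod = (z : WithOne S) := by
  classical
  haveI : Fintype (WithOne S) := inferInstanceAs (Fintype (Option S))
  set L := Nat.clog 2 (Fintype.card S) with hLdef
  -- basic `WithOne` facts
  have mul_ne_one : ∀ x y : WithOne S, x ≠ 1 → x * y ≠ 1 := by
    intro x y hx
    obtain ⟨a, rfl⟩ := WithOne.ne_one_iff_exists.mp hx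
    rcases eq_or_ne y 1 with rfl | hy
    · simpa using hx
    · obtain ⟨b, rfl⟩ := WithOne.ne_one_iff_exists.mp hy
      rw [← WithOne.coe_mul]; exact WithOne.coe_ne_one
  have pow_ne_one : ∀ (a : S) (n : ℕ), 1 ≤ n → ((a : WithOne S)) ^ n ≠ 1 := by
    intro a n hn
    obtain ⟨m, rfl⟩ := Nat.exists_eq_add_of_le hn
    rw [pow_add, pow_one]
    exact mul_ne_one _ _ WithOne.coe_ne_one
  have prod_ne_one : ∀ (C : Finset S), C.Nonempty → (∏ s ∈ C, (s : WithOne S)) ≠ 1 := by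
    intro C ⟨a, ha⟩
    rw [← Finset.mul_prod_erase C _ ha]
    exact mul_ne_one _ _ WithOne.coe_ne_one
  -- collisions of powers
  have pow_collision : ∀ a : S, ∃ i j, 1 ≤ i ∧ i < j ∧ j ≤ k + 1 ∧
      (a : WithOne S) ^ i = (a : WithOne S) ^ j := by
    intro a
    by_contra hcon
    push_neg at hcon
    have hinj : Function.Injective
        (fun t : Fin (k+1) => WithOne.unone (pow_ne_one a ((t : ℕ)+1) (by omega))) := by
      intro t t' h
      have h2 : (a : WithOne S) ^ ((t : ℕ)+1) = (a : WithOne S) ^ ((t' : ℕ)+1) := by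
        have h3 := congrArg (fun x : S => (x : WithOne S)) h
        simpa [WithOne.coe_unone] using h3
      by_contra hne
      have hne' : (t : ℕ) ≠ (t' : ℕ) := fun hc => hne (Fin.ext hc)
      rcases Nat.lt_or_ge (t : ℕ) (t' : ℕ) with hlt | hge
      · exact hcon _ _ (by omega) (by omega) (by omega) h2
      · exact hcon _ _ (by omega) (by omega) (by omega) h2.symm
    have himg : ↑(Finset.univ.image
        (fun t : Fin (k+1) => WithOne.unone (pow_ne_one a ((t : ℕ)+1) (by omega)))) ⊆
        monogenic a := by
      intro x hx
      simp only [Finset.coe_image, Set.mem_image, Finset.mem_coe, Finset.mem_univ] at hx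
      obtain ⟨t, _, rfl⟩ := hx
      exact ⟨(t : ℕ) + 1, by omega, WithOne.coe_unone _⟩
    have hcard := Set.ncard_le_ncard himg (Set.toFinite _)
    rw [Set.ncard_coe_finset, Finset.card_image_of_injective _ hinj, Finset.card_univ,
      Fintype.card_fin] at hcard
    have := hk a
    omega
  have hk1 : 1 ≤ k := by
    obtain ⟨i, j, hi, hij, hjk, _⟩ := pow_collision (Classical.arbitrary S)
    omega
  have pow_fix : ∀ (p u : WithOne S), p * u = p → ∀ t : ℕ, p * u ^ t = p := by
    intro p u h t
    induction t with
    | zero => simp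
    | succ t iht => rw [pow_succ, ← mul_assoc, iht, h]
  have shift1 : ∀ (a : S) (i p m : ℕ), (a : WithOne S) ^ i = (a : WithOne S) ^ (i + p) →
      i ≤ m → (a : WithOne S) ^ (m + p) = (a : WithOne S) ^ m := by
    intro a i p m h him
    obtain ⟨d, rfl⟩ := Nat.exists_eq_add_of_le him
    rw [show i + d + p = (i + p) + d by omega, pow_add, ← h, ← pow_add]
  have shiftt : ∀ (a : S) (i p m : ℕ), (a : WithOne S) ^ i = (a : WithOne S) ^ (i + p) →
      i ≤ m → ∀ t, (a : WithOne S) ^ (m + t * p) = (a : WithOne S) ^ m := by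
    intro a i p m h him t
    induction t with
    | zero => simp
    | succ t iht =>
      rw [show m + (t+1) * p = (m + t * p) + p by ring,
        shift1 a i p (m + t * p) h (by omega), iht]
  have exists_pow_idem : ∀ a : S, ∃ N, 1 ≤ N ∧
      (a : WithOne S) ^ N * (a : WithOne S) ^ N = (a : WithOne S) ^ N := by
    intro a
    obtain ⟨i, j, hi, hij, hjk, heq⟩ := pow_collision a
    have h' : (a : WithOne S) ^ i = (a : WithOne S) ^ (i + (j - i)) := by
      rw [show i + (j - i) = j by omega]; exact heq
    have hle : i ≤ i * (j - i) := Nat.le_mul_of_pos_right i (by omega)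
    refine ⟨i * (j - i), by have := Nat.mul_pos (show 0 < i by omega) (show 0 < j - i by omega); omega, ?_⟩
    rw [← pow_add]
    exact shiftt a i (j - i) (i * (j - i)) h' hle i
  -- the zero element
  obtain ⟨N₀, hN₀, hidem₀⟩ := exists_pow_idem (Classical.arbitrary S)
  have hne₀ : ((Classical.arbitrary S : S) : WithOne S) ^ N₀ ≠ 1 := pow_ne_one _ _ hN₀
  set z := WithOne.unone hne₀ with hzdef
  have hz : (z : WithOne S) = ((Classical.arbitrary S : S) : WithOne S) ^ N₀ :=
    WithOne.coe_unone hne₀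
  have zz : z * z = z := by
    have : ((z * z : S) : WithOne S) = (z : WithOne S) := by
      rw [WithOne.coe_mul, hz, hidem₀]
    exact WithOne.coe_inj.mp this
  have idem_zero : ∀ w : S, w * w = w → ∀ x : S, w * x = w := by
    intro w hw x
    have h := hLI w x hw
    have h2 : w * x * w = w * x := by rw [mul_assoc, mul_comm x w, ← mul_assoc, hw]
    exact h2.symm.trans h
  have idem_eq_z : ∀ w : S, w * w = w → w = z := by
    intro w hw
    have h1 : w * z = w := idem_zero w hw z
    have h2 : z * w = z := idem_zero z zz w
    rw [← h1, mul_comm, h2]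
  have zabs : ∀ m : WithOne S, (z : WithOne S) * m = z := by
    intro m
    rcases eq_or_ne m 1 with rfl | hm
    · exact mul_one _
    · obtain ⟨b, rfl⟩ := WithOne.ne_one_iff_exists.mp hm
      rw [← WithOne.coe_mul]
      exact congrArg _ (idem_zero z zz b)
  have zabs' : ∀ m : WithOne S, m * (z : WithOne S) = z := fun m => by
    rw [mul_comm]; exact zabs m
  have pow_z : ∀ a : S, ∃ N, 1 ≤ N ∧ (a : WithOne S) ^ N = (z : WithOne S) := by
    intro a
    obtain ⟨N, hN, hid⟩ := exists_pow_idem a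
    have hne : (a : WithOne S) ^ N ≠ 1 := pow_ne_one a N hN
    obtain ⟨w, hw⟩ := WithOne.ne_one_iff_exists.mp hne
    have hww : w * w = w := by
      apply WithOne.coe_inj.mp
      rw [WithOne.coe_mul, hw, hid]
    refine ⟨N, hN, ?_⟩
    rw [← hw, idem_eq_z w hww]
  have fix_z : ∀ p u : WithOne S, u ≠ 1 → p * u = p → p = (z : WithOne S) := by
    intro p u hu hf
    obtain ⟨a, rfl⟩ := WithOne.ne_one_iff_exists.mp hu
    obtain ⟨N, hN, hNz⟩ := pow_z a
    have h1 := pow_fix p _ hf N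
    rw [hNz, zabs'] at h1
    exact h1.symm
  have powk : ∀ a : S, (a : WithOne S) ^ k = (z : WithOne S) := by
    intro a
    obtain ⟨i, j, hi, hij, hjk, heq⟩ := pow_collision a
    have h1 : (a : WithOne S) ^ i * (a : WithOne S) ^ (j - i) = (a : WithOne S) ^ i := by
      rw [← pow_add, show i + (j - i) = j by omega]; exact heq.symm
    have h3 : (a : WithOne S) ^ i = (z : WithOne S) :=
      fix_z _ _ (pow_ne_one a _ (by omega)) h1
    have h4 : (a : WithOne S) ^ k = (a : WithOne S) ^ i * (a : WithOne S) ^ (k - i) := by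
      rw [← pow_add, show i + (k - i) = k by omega]
    rw [h4, h3, zabs]
  -- factoring lemmas
  have factor : ∀ (e : S → ℕ) (A : Finset S), (∀ s ∈ A, 1 ≤ e s) →
      (∏ s : S, (s : WithOne S) ^ e s)
        = (∏ s ∈ A, (s : WithOne S)) *
          ∏ s : S, (s : WithOne S) ^ (e s - if s ∈ A then 1 else 0) := by
    intro e A hA
    have hAprod : (∏ s ∈ A, (s : WithOne S)) = ∏ s : S, if s ∈ A then (s : WithOne S) else 1 := by
      rw [Finset.prod_ite_mem, Finset.univ_inter]
    rw [hAprod, ← Finset.prod_mul_distrib]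
    apply Finset.prod_congr rfl
    intro s _
    by_cases hs : s ∈ A
    · have h1 := hA s hs
      rw [if_pos hs, if_pos hs, ← pow_succ']
      congr 1
      omega
    · rw [if_neg hs, if_neg hs, one_mul, Nat.sub_zero]
  have factor_add : ∀ (e : S → ℕ) (A : Finset S),
      (∏ s ∈ A, (s : WithOne S)) * ∏ s : S, (s : WithOne S) ^ e s
        = ∏ s : S, (s : WithOne S) ^ (e s + if s ∈ A then 1 else 0) := by
    intro e A
    have hAprod : (∏ s ∈ A, (s : WithOne S)) = ∏ s : S, if s ∈ A then (s : WithOne S) else 1 := by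
      rw [Finset.prod_ite_mem, Finset.univ_inter]
    rw [hAprod, ← Finset.prod_mul_distrib]
    apply Finset.prod_congr rfl
    intro s _
    by_cases hs : s ∈ A
    · rw [if_pos hs, if_pos hs, ← pow_succ']
    · rw [if_neg hs, if_neg hs, one_mul, Nat.add_zero]
  have sum_ind : ∀ (A : Finset S), (∑ s : S, if s ∈ A then 1 else 0) = A.card := by
    intro A
    rw [Finset.sum_ite_mem, Finset.univ_inter]
    simp
  -- the main induction
  have main : ∀ (B : ℕ) (e : S → ℕ),
      (Fintype.card S * k ^ 2 + 1) * (Fintype.card S * k - ∑ s : S, e s)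
        + (Fintype.card S * k ^ 2 - ∑ s : S, (e s) ^ 2) < B →
      k * (L + 1) ≤ ∑ s : S, e s →
      ∏ s : S, (s : WithOne S) ^ e s = (z : WithOne S) := by
    intro B
    induction B with
    | zero => intro e h; exact absurd h (Nat.not_lt_zero _)
    | succ B ih =>
      intro e hmu hn
      by_cases hbig : ∃ s, k ≤ e s
      · obtain ⟨s, hs⟩ := hbig
        rw [← Finset.mul_prod_erase Finset.univ _ (Finset.mem_univ s)]
        have h1 : (s : WithOne S) ^ e s = (z : WithOne S) * (s : WithOne S) ^ (e s - k) := by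
          rw [← powk s, ← pow_add]
          congr 1
          omega
        rw [h1, mul_assoc]
        exact zabs _
      · push_neg at hbig
        set D := Finset.univ.filter (fun s => e s ≠ 0) with hDdef
        have hsupp : ∀ s ∈ D, 1 ≤ e s := by
          intro s hs
          have := (Finset.mem_filter.mp hs).2
          omega
        have hnsum : ∑ s : S, e s = ∑ s ∈ D, e s := (Finset.sum_filter_ne_zero _).symm
        have hDcard : L + 2 ≤ D.card := by
          have h2 : ∑ s ∈ D, (e s + 1) ≤ ∑ s ∈ D, k :=
            Finset.sum_le_sum (fun s _ => by have := hbig s; omega)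
          rw [Finset.sum_add_distrib, Finset.sum_const, smul_eq_mul, mul_one,
            Finset.sum_const, smul_eq_mul] at h2
          by_contra hcon
          push_neg at hcon
          have h3 : D.card * k ≤ (L + 1) * k := Nat.mul_le_mul_right k (by omega)
          have h4 : (L + 1) * k = k * (L + 1) := mul_comm _ _
          have h5 : D.card = 0 := by omega
          rw [Finset.card_eq_zero] at h5
          rw [h5, Finset.sum_empty] at hnsum
          have h6 : 0 < k * (L + 1) := Nat.mul_pos (by omega) (by omega)
          omega
        have cardM : Fintype.card (WithOne S) = Fintype.card S + 1 :=
          (Fintype.card_congr (show WithOne S ≃ Option S from Equiv.refl _)).trans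
            Fintype.card_option
        have hcard2 : Fintype.card (WithOne S) < D.powerset.card := by
          rw [Finset.card_powerset, cardM]
          have e1 : Fintype.card S ≤ 2 ^ L := Nat.le_pow_clog one_lt_two _
          have e2 : (2:ℕ) ^ (L + 2) ≤ 2 ^ D.card := Nat.pow_le_pow_right (by norm_num) hDcard
          have e3 : (2:ℕ) ^ (L + 2) = 4 * 2 ^ L := by ring
          have e4 : (1:ℕ) ≤ 2 ^ L := Nat.one_le_two_pow
          omega
        obtain ⟨A, hAmem, Bs, hBmem, hABne, hABeq⟩ :=
          Finset.exists_ne_map_eq_of_card_lt_of_maps_to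
            (t := (Finset.univ : Finset (WithOne S)))
            (by rw [Finset.card_univ]; exact hcard2)
            (fun (a : Finset S) _ => Finset.mem_univ (∏ s ∈ a, (s : WithOne S)))
        have hA : A ⊆ D := Finset.mem_powerset.mp hAmem
        have hB : Bs ⊆ D := Finset.mem_powerset.mp hBmem
        by_cases hsub : A ⊆ Bs ∨ Bs ⊆ A
        · -- comparable case: the common product is z
          have key : ∀ C C' : Finset S, C ⊆ C' → C ≠ C' →
              (∏ s ∈ C', (s : WithOne S)) = (∏ s ∈ C, (s : WithOne S)) →
              (∏ s ∈ C, (s : WithOne S)) = (z : WithOne S) := by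
            intro C C' hCC hne heq
            have hnonempty : (C' \ C).Nonempty := by
              rw [Finset.sdiff_nonempty]
              intro hc
              exact hne (Finset.Subset.antisymm hCC hc)
            have hw : (∏ s ∈ C' \ C, (s : WithOne S)) ≠ 1 := prod_ne_one _ hnonempty
            have hfix : (∏ s ∈ C, (s : WithOne S)) * (∏ s ∈ C' \ C, (s : WithOne S))
                = ∏ s ∈ C, (s : WithOne S) := by
              rw [mul_comm, Finset.prod_sdiff hCC, heq]
            exact fix_z _ _ hw hfix
          have hzA : (∏ s ∈ A, (s : WithOne S)) = (z : WithOne S) := by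
            rcases hsub with h | h
            · exact key A Bs h hABne hABeq.symm
            · rw [hABeq]; exact key Bs A h (Ne.symm hABne) hABeq
          rw [factor e A (fun s hs => hsupp s (hA hs)), hzA]
          exact zabs _
        · push_neg at hsub
          obtain ⟨hABs, hBsA⟩ := hsub
          -- choose orientation X → Y
          obtain ⟨X, Y, hXD, hYD, hpXY, hXYne, hYXne, hori⟩ :
              ∃ X Y : Finset S, X ⊆ D ∧ Y ⊆ D ∧
                (∏ s ∈ X, (s : WithOne S)) = (∏ s ∈ Y, (s : WithOne S)) ∧
                ¬ X ⊆ Y ∧ ¬ Y ⊆ X ∧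
                ((X \ Y).card < (Y \ X).card ∨
                  ((X \ Y).card = (Y \ X).card ∧
                    ∑ s ∈ X \ Y, e s ≤ ∑ s ∈ Y \ X, e s)) := by
            rcases lt_trichotomy ((A \ Bs).card) ((Bs \ A).card) with h | h | h
            · exact ⟨A, Bs, hA, hB, hABeq, hABs, hBsA, Or.inl h⟩
            · rcases le_total (∑ s ∈ A \ Bs, e s) (∑ s ∈ Bs \ A, e s) with h' | h'
              · exact ⟨A, Bs, hA, hB, hABeq, hABs, hBsA, Or.inr ⟨h, h'⟩⟩
              · exact ⟨Bs, A, hB, hA, hABeq.symm, hBsA, hABs, Or.inr ⟨h.symm, h'⟩⟩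
            · exact ⟨Bs, A, hB, hA, hABeq.symm, hBsA, hABs, Or.inl h⟩
          have hsuppX : ∀ s ∈ X, 1 ≤ e s := fun s hs => hsupp s (hXD hs)
          set e' : S → ℕ :=
            fun s => (e s - if s ∈ X then 1 else 0) + if s ∈ Y then 1 else 0 with he'
          have hPP : (∏ s : S, (s : WithOne S) ^ e s) = ∏ s : S, (s : WithOne S) ^ e' s := by
            rw [factor e X hsuppX, hpXY, factor_add]
          have hkey : ∀ s : S, e' s + (if s ∈ X then 1 else 0)
              = e s + (if s ∈ Y then 1 else 0) := by
            intro s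
            simp only [he']
            by_cases h1 : s ∈ X
            · have h1' := hsuppX s h1
              by_cases h2 : s ∈ Y <;> simp [h1, h2] <;> omega
            · by_cases h2 : s ∈ Y <;> simp [h1, h2]
          have hsum1 : (∑ s : S, e' s) + X.card = (∑ s : S, e s) + Y.card := by
            rw [← sum_ind X, ← sum_ind Y, ← Finset.sum_add_distrib, ← Finset.sum_add_distrib]
            exact Finset.sum_congr rfl fun s _ => hkey s
          have hkey2 : ∀ s : S, (e' s) ^ 2 + (if s ∈ X \ Y then 2 * e s - 1 else 0)
              = (e s) ^ 2 + (if s ∈ Y \ X then 2 * e s + 1 else 0) := by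
            intro s
            simp only [he', Finset.mem_sdiff]
            by_cases h1 : s ∈ X
            · have h1' := hsuppX s h1
              obtain ⟨m, hm⟩ : ∃ m, e s = m + 1 := ⟨e s - 1, by omega⟩
              have h4 : 2 * (m + 1) - 1 = 2 * m + 1 := by omega
              by_cases h2 : s ∈ Y
              · simp [h1, h2, hm]
              · simp only [h1, h2, hm, h4, Nat.add_sub_cancel, and_true, and_false, false_and,
                  not_true, not_false_iff, if_true, if_false, ite_true, ite_false, add_zero]
                ring_nf
            · by_cases h2 : s ∈ Y
              · simp only [h1, h2, and_true, and_false, false_and, not_true, not_false_iff,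
                  if_true, if_false, ite_true, ite_false, add_zero, Nat.sub_zero, zero_add]
                ring_nf
              · simp [h1, h2]
          have hsum2 : (∑ s : S, (e' s) ^ 2) + (∑ s ∈ X \ Y, (2 * e s - 1))
              = (∑ s : S, (e s) ^ 2) + ∑ s ∈ Y \ X, (2 * e s + 1) := by
            have hXY' : (∑ s : S, if s ∈ X \ Y then 2 * e s - 1 else 0)
                = ∑ s ∈ X \ Y, (2 * e s - 1) := by rw [Finset.sum_ite_mem, Finset.univ_inter]
            have hYX' : (∑ s : S, if s ∈ Y \ X then 2 * e s + 1 else 0)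
                = ∑ s ∈ Y \ X, (2 * e s + 1) := by rw [Finset.sum_ite_mem, Finset.univ_inter]
            rw [← hXY', ← hYX', ← Finset.sum_add_distrib, ← Finset.sum_add_distrib]
            exact Finset.sum_congr rfl fun s _ => hkey2 s
          have hSg : (∑ s ∈ X \ Y, (2 * e s - 1)) + (X \ Y).card
              = 2 * ∑ s ∈ X \ Y, e s := by
            rw [Finset.card_eq_sum_ones, ← Finset.sum_add_distrib, Finset.mul_sum]
            apply Finset.sum_congr rfl
            intro s hs
            have := hsuppX s (Finset.mem_sdiff.mp hs).1
            omega
          have hSh : (∑ s ∈ Y \ X, (2 * e s + 1)) = 2 * (∑ s ∈ Y \ X, e s) + (Y \ X).card := by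
            rw [Finset.sum_add_distrib, Finset.mul_sum, Finset.card_eq_sum_ones]
          have hcX : (X ∩ Y).card + (X \ Y).card = X.card := Finset.card_inter_add_card_sdiff X Y
          have hcY : (Y ∩ X).card + (Y \ X).card = Y.card := Finset.card_inter_add_card_sdiff Y X
          have hIC : (X ∩ Y).card = (Y ∩ X).card := by rw [Finset.inter_comm]
          have hXYpos : 0 < (X \ Y).card :=
            Finset.card_pos.mpr (by rw [Finset.sdiff_nonempty]; exact hXYne)
          have hYXpos : 0 < (Y \ X).card :=
            Finset.card_pos.mpr (by rw [Finset.sdiff_nonempty]; exact hYXne)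
          have hub1 : ∀ s : S, e' s ≤ k := by
            intro s
            simp only [he']
            have := hbig s
            by_cases h1 : s ∈ X <;> by_cases h2 : s ∈ Y <;> simp [h1, h2] <;> omega
          have hubq' : (∑ s : S, (e' s) ^ 2) ≤ Fintype.card S * k ^ 2 := by
            calc (∑ s : S, (e' s) ^ 2) ≤ ∑ s : S, k ^ 2 :=
                Finset.sum_le_sum fun s _ => Nat.pow_le_pow_left (hub1 s) 2
              _ = Fintype.card S * k ^ 2 := by
                rw [Finset.sum_const, smul_eq_mul, Finset.card_univ]
          have hubq : (∑ s : S, (e s) ^ 2) ≤ Fintype.card S * k ^ 2 := by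
            calc (∑ s : S, (e s) ^ 2) ≤ ∑ s : S, k ^ 2 :=
                Finset.sum_le_sum fun s _ => Nat.pow_le_pow_left (le_of_lt (by
                  have := hbig s; omega)) 2
              _ = Fintype.card S * k ^ 2 := by
                rw [Finset.sum_const, smul_eq_mul, Finset.card_univ]
          have hubn' : (∑ s : S, e' s) ≤ Fintype.card S * k := by
            calc (∑ s : S, e' s) ≤ ∑ s : S, k := Finset.sum_le_sum fun s _ => hub1 s
              _ = Fintype.card S * k := by rw [Finset.sum_const, smul_eq_mul, Finset.card_univ]
          have hubn : (∑ s : S, e s) ≤ Fintype.card S * k := by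
            calc (∑ s : S, e s) ≤ ∑ s : S, k :=
                Finset.sum_le_sum fun s _ => le_of_lt (hbig s)
              _ = Fintype.card S * k := by rw [Finset.sum_const, smul_eq_mul, Finset.card_univ]
          rw [hPP]
          rcases hori with hlt | ⟨hceq, hsle⟩
          · have hlt' : (∑ s : S, e s) < ∑ s : S, e' s := by omega
            refine ih e' ?_ (by omega)
            have hd1 : (Fintype.card S * k - ∑ s : S, e' s) + 1
                ≤ Fintype.card S * k - ∑ s : S, e s := by omega
            have hd2 := Nat.mul_le_mul_left (Fintype.card S * k ^ 2 + 1) hd1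
            rw [Nat.mul_add, mul_one] at hd2
            omega
          · have hneq : (∑ s : S, e' s) = ∑ s : S, e s := by omega
            have hq : (∑ s : S, (e s) ^ 2) < ∑ s : S, (e' s) ^ 2 := by omega
            refine ih e' ?_ (by omega)
            rw [hneq]
            omega
  refine ⟨z, fun x => ⟨idem_zero z zz x, by rw [mul_comm]; exact idem_zero z zz x⟩, ?_⟩
  have hLmap : ∀ l : List S,
      (l.map fun x => (x : WithOne S)) = List.map (fun x : S => (x : WithOne S)) l := by
    intro l
    induction l with
    | nil => rfl
    | cons a t iht => simpa using iht
  intro l hl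
  have hL := hLmap l
  have h1 : (List.map (fun x : S => (x : WithOne S)) l).prod
      = ∏ m ∈ l.toFinset, (m : WithOne S) ^ l.count m := Finset.prod_list_map_count l _
  have h2 : (∏ m ∈ l.toFinset, (m : WithOne S) ^ l.count m)
      = ∏ m : S, (m : WithOne S) ^ l.count m := by
    apply Finset.prod_subset (Finset.subset_univ _)
    intro x _ hx
    rw [List.count_eq_zero.mpr (fun h => hx (List.mem_toFinset.mpr h)), pow_zero]
  have h3 : (∑ m : S, l.count m) = l.length := by
    rw [← List.sum_toFinset_count_eq_length l]
    refine (Finset.sum_subset (Finset.subset_univ _) ?_).symm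
    intro x _ hx
    exact List.count_eq_zero.mpr (fun h => hx (List.mem_toFinset.mpr h))
  rw [hL, h1, h2]
  exact main _ (fun m => l.count m) (Nat.lt_succ_self _) (by rw [h3]; exact hl)
end

section
/- Let S be a finite semigroup of cardinality n and let x₁, …, x_{n+1} ∈ S. Then there exist an index i ∈ {1, …, n+1} and an idempotent element e ∈ S such that x₁⋯x_i · e = x₁⋯x_i. -/
theorem aux_idem {M : Type*} [Monoid M] [Finite M] (a : M) :
    ∃ k : ℕ, 1 ≤ k ∧ a ^ k * a ^ k = a ^ k := by
  obtain ⟨m, n, hne, he⟩ := Finite.exists_ne_map_eq_of_infinite (fun k : ℕ => a ^ k)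
  wlog hmn : m < n generalizing m n
  · exact this n m hne.symm he.symm (by omega)
  obtain ⟨d, rfl⟩ : ∃ d, n = m + d := ⟨n - m, by omega⟩
  have hd1 : 1 ≤ d := by omega
  have he2 : a ^ (m + d) = a ^ m := he.symm
  have hstep : ∀ j t : ℕ, a ^ (m + j + t * d) = a ^ (m + j) := by
    intro j t
    induction t with
    | zero => simp
    | succ t ih =>
      have h1 : m + j + (t + 1) * d = (m + d) + (j + t * d) := by ring
      rw [h1, pow_add, he2, ← pow_add]
      have h2 : m + (j + t * d) = m + j + t * d := by ring
      rw [h2, ih]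
  have hk : m + 1 ≤ (m + 1) * d := Nat.le_mul_of_pos_right _ hd1
  refine ⟨(m + 1) * d, by omega, ?_⟩
  obtain ⟨j, hj⟩ : ∃ j, (m + 1) * d = m + j := ⟨(m + 1) * d - m, by omega⟩
  rw [← pow_add]
  have h2 : (m + 1) * d + (m + 1) * d = m + j + (m + 1) * d := by rw [hj]
  rw [h2, hstep, hj]

theorem map_coe_eq {S : Type*} [Semigroup S] (l : List S) :
    (l.map fun s => (s : WithOne S)) = List.map WithOne.coe l := by
  simp only [List.map_id']
  exact List.flatMap_pure_eq_map _ _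

theorem coe_prod_aux {S : Type*} [Semigroup S] :
    ∀ (l : List S) (a : S), ∃ s : S,
      ((a :: l).map (WithOne.coe : S → WithOne S)).prod = (s : WithOne S) := by
  intro l
  induction l with
  | nil => exact fun a => ⟨a, by simp⟩
  | cons b t ih =>
    intro a
    obtain ⟨s, hs⟩ := ih b
    refine ⟨a * s, ?_⟩
    rw [List.map_cons, List.prod_cons, hs, ← WithOne.coe_mul]

theorem coe_pow_aux {S : Type*} [Semigroup S] (y : S) :
    ∀ k : ℕ, ∃ e : S, ((y : WithOne S)) ^ (k + 1) = (e : WithOne S) := by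
  intro k
  induction k with
  | zero => exact ⟨y, pow_one _⟩
  | succ k ih =>
    obtain ⟨e, he⟩ := ih
    exact ⟨e * y, by rw [pow_succ, he, WithOne.coe_mul]⟩

/-- Let `S` be a finite semigroup of cardinality `n` and `x₁, …, x_{n+1} ∈ S`. Then
there exist an index `i ∈ {1, …, n+1}` and an idempotent `e ∈ S` such that
`x₁⋯x_i · e = x₁⋯x_i` (the product of the first `i` elements being computed in
`WithOne S`, into which `S` embeds). -/
theorem stmt_12 {S : Type*} [Semigroup S] [Fintype S]
    (x : Fin (Fintype.card S + 1) → S) :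
    ∃ i : ℕ, 1 ≤ i ∧ i ≤ Fintype.card S + 1 ∧ ∃ e : S, e * e = e ∧
      (((List.ofFn x).take i).map fun s => (s : WithOne S)).prod * (e : WithOne S) =
        (((List.ofFn x).take i).map fun s => (s : WithOne S)).prod := by
  classical
  simp only [map_coe_eq]
  set L := List.ofFn x with hL
  have hlen : L.length = Fintype.card S + 1 := by simp [hL]
  set f : ℕ → WithOne S := fun k => ((L.take k).map (WithOne.coe : S → WithOne S)).prod with hf
  have hcoe : ∀ i : Fin (Fintype.card S + 1), ∃ s : S, f ((i : ℕ) + 1) = (s : WithOne S) := by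
    intro i
    have h1 : L.take ((i : ℕ) + 1) ≠ [] := by
      intro h
      have h2 := congrArg List.length h
      simp only [List.length_take, hlen, List.length_nil] at h2
      omega
    obtain ⟨a, t, hat⟩ := List.exists_cons_of_ne_nil h1
    obtain ⟨s, hs⟩ := coe_prod_aux t a
    exact ⟨s, by rw [hf]; simp only [hat]; exact hs⟩
  choose g hg using hcoe
  obtain ⟨i, j, hne, hij⟩ := Fintype.exists_ne_map_eq_of_card_lt g (by simp)
  have hvne : (i : ℕ) ≠ (j : ℕ) := fun h => hne (Fin.ext h)
  wlog hlt : (i : ℕ) < (j : ℕ) generalizing i j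
  · exact this j i hne.symm hij.symm (fun h => hne (Fin.ext h.symm)) (by omega)
  have hfe : f ((i : ℕ) + 1) = f ((j : ℕ) + 1) := by rw [hg i, hg j, hij]
  set seg := (L.drop ((i : ℕ) + 1)).take ((j : ℕ) - (i : ℕ)) with hseg
  have hsplit : L.take ((j : ℕ) + 1) = L.take ((i : ℕ) + 1) ++ seg := by
    rw [hseg, ← List.take_add]
    congr 1
    omega
  have hsegne : seg ≠ [] := by
    intro h
    have h2 := congrArg List.length h
    have hjlt := j.isLt
    simp only [hseg, List.length_take, List.length_drop, hlen, List.length_nil] at h2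
    omega
  obtain ⟨a, t, hat⟩ := List.exists_cons_of_ne_nil hsegne
  obtain ⟨y, hy⟩ := coe_prod_aux t a
  have hQ : (seg.map (WithOne.coe : S → WithOne S)).prod = (y : WithOne S) := by
    rw [hat]; exact hy
  have hfix : f ((i : ℕ) + 1) * (y : WithOne S) = f ((i : ℕ) + 1) := by
    rw [← hQ]
    have h3 : f ((j : ℕ) + 1)
        = f ((i : ℕ) + 1) * (seg.map (WithOne.coe : S → WithOne S)).prod := by
      rw [hf]
      simp only [hsplit, List.map_append, List.prod_append]
    rw [← h3, ← hfe]
  have hfixpow : ∀ t : ℕ, f ((i : ℕ) + 1) * ((y : WithOne S)) ^ t = f ((i : ℕ) + 1) := by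
    intro t
    induction t with
    | zero => simp
    | succ t ih => rw [pow_succ, ← mul_assoc, ih, hfix]
  haveI : Finite (WithOne S) := inferInstanceAs (Finite (Option S))
  obtain ⟨k, hk1, hkid⟩ := aux_idem ((y : WithOne S))
  obtain ⟨k', rfl⟩ : ∃ k', k = k' + 1 := ⟨k - 1, by omega⟩
  obtain ⟨e, he⟩ := coe_pow_aux y k'
  refine ⟨(i : ℕ) + 1, by omega, by have := i.isLt; omega, e, ?_, ?_⟩
  · have h4 : ((e : WithOne S)) * (e : WithOne S) = (e : WithOne S) := by
      rw [← he]; exact hkid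
    rw [← WithOne.coe_mul] at h4
    exact WithOne.coe_inj.mp h4
  · have h5 := hfixpow (k' + 1)
    rw [he] at h5
    exact h5
end
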